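/- Every zero z of the monic right quaternionic polynomial f_r(z) = zⁿ + z^{n−1} q_n + ⋯ + z q₂ + q₁ satisfies |z| ≤ α + √(1 + Σ_{j=1}^{n−1} |q_j|²), where α = √(Σ_{j=1}^{n} |q_j − q_{j−1}|²) with q₀ = 0. -/

import Mathlib

/-!
Write `r = ‖z‖`, `n = m + 1` and `y = z ^ m + ∑_{i<m} z ^ i q_{i+1}`. Since `f_r(z) = 0` and
`q₀ = 0`, `z y = -∑_{i≤m} z ^ i (q_{i+1} - q_i)`. Cauchy–Schwarz together with the geometric-sum
bound `√(r² - 1) · (∑_{i<k} r^{2i})^{1/2} ≤ r ^ k` turns this into `√(r² - 1) ‖y‖ ≤ r ^ m α`, and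
applied to `z ^ m = y - ∑_{i<m} z ^ i q_{i+1}` it gives `√(r² - 1) r ^ m ≤ √(r² - 1) ‖y‖ + r ^ m γ`,
where `γ² = ∑_{j<n} ‖q_j‖²`. Hence `√(r² - 1) ≤ α + γ`, i.e. `r² ≤ 1 + (α + γ)² ≤ (α + √(1 + γ²))²`.
-/

open scoped Quaternion
open Finset Matrix

noncomputable def specNorm {n : ℕ} (A : Matrix (Fin n) (Fin n) ℍ[ℝ]) : ℝ :=
  sSup {r : ℝ | ∃ x : Fin n → ℍ[ℝ], x ≠ 0 ∧
    r = Real.sqrt (∑ i, ‖A.mulVec x i‖ ^ 2) / Real.sqrt (∑ i, ‖x i‖ ^ 2)}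

lemma Finset.sum_Icc_one_eq_sum_range {M : Type*} [AddCommMonoid M] (f : ℕ → M) (n : ℕ) :
    ∑ i ∈ Icc 1 n, f i = ∑ i ∈ range n, f (i + 1) := by
  rw [← Ico_add_one_right_eq_Icc, range_eq_Ico, sum_Ico_add']

lemma Real.sqrt_sq_sub_one_mul_sqrt_sum_sq_pow_le {r : ℝ} (hr : 1 ≤ r) (m : ℕ) :
    √(r ^ 2 - 1) * √(∑ i ∈ range m, (r ^ i) ^ 2) ≤ r ^ m := by
  have hgeom : (r ^ 2 - 1) * ∑ i ∈ range m, (r ^ i) ^ 2 = (r ^ m) ^ 2 - 1 := by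
    simp_rw [← pow_mul, mul_comm _ 2, pow_mul, mul_comm (r ^ 2 - 1), geom_sum_mul]
  rw [← Real.sqrt_mul (by nlinarith), hgeom]
  exact (Real.sqrt_le_sqrt (sub_le_self _ zero_le_one)).trans_eq (Real.sqrt_sq (by positivity))

lemma sqrt_norm_sq_sub_one_mul_norm_sum_pow_mul_le {R : Type*} [NormedRing R] [NormOneClass R]
    {z : R} (hz : 1 ≤ ‖z‖) (a : ℕ → R) (m : ℕ) :
    √(‖z‖ ^ 2 - 1) * ‖∑ i ∈ range m, z ^ i * a i‖ ≤ ‖z‖ ^ m * √(∑ i ∈ range m, ‖a i‖ ^ 2) := by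
  have hcs : ‖∑ i ∈ range m, z ^ i * a i‖ ≤
      √(∑ i ∈ range m, (‖z‖ ^ i) ^ 2) * √(∑ i ∈ range m, ‖a i‖ ^ 2) :=
    (norm_sum_le _ _).trans <| (sum_le_sum fun i _ => (norm_mul_le _ _).trans <|
      mul_le_mul_of_nonneg_right (norm_pow_le z i) (norm_nonneg _)).trans
      (Real.sum_mul_le_sqrt_mul_sqrt _ _ _)
  calc √(‖z‖ ^ 2 - 1) * ‖∑ i ∈ range m, z ^ i * a i‖
      ≤ √(‖z‖ ^ 2 - 1) * √(∑ i ∈ range m, (‖z‖ ^ i) ^ 2) * √(∑ i ∈ range m, ‖a i‖ ^ 2) := by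
        rw [mul_assoc]; gcongr
    _ ≤ ‖z‖ ^ m * √(∑ i ∈ range m, ‖a i‖ ^ 2) := by
        gcongr; exact Real.sqrt_sq_sub_one_mul_sqrt_sum_sq_pow_le hz m

lemma mul_sum_range_pow_mul_succ {R : Type*} [Semiring R] (z : R) {q : ℕ → R} (hq0 : q 0 = 0)
    (m : ℕ) : z * ∑ i ∈ range m, z ^ i * q (i + 1) = ∑ i ∈ range (m + 1), z ^ i * q i := by
  simp [sum_range_succ', hq0, mul_sum, ← mul_assoc, ← pow_succ']

lemma mul_quotient_eq_neg_sum_of_root {R : Type*} [Ring R] {z : R} {q : ℕ → R} (hq0 : q 0 = 0)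
    {m : ℕ} (hz : z ^ (m + 1) + ∑ i ∈ range (m + 1), z ^ i * q (i + 1) = 0) :
    z * (z ^ m + ∑ i ∈ range m, z ^ i * q (i + 1)) =
      -∑ i ∈ range (m + 1), z ^ i * (q (i + 1) - q i) := by
  simp only [mul_add, mul_sum_range_pow_mul_succ z hq0, ← pow_succ', mul_sub, sum_sub_distrib,
    neg_sub, eq_neg_of_add_eq_zero_right hz]
  abel


theorem sqrt_norm_sq_sub_one_le_of_root {R : Type*} [NormedDivisionRing R] {z : R} {q : ℕ → R}
    (hq0 : q 0 = 0) {m : ℕ} (hz : z ^ (m + 1) + ∑ i ∈ range (m + 1), z ^ i * q (i + 1) = 0) :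
    √(‖z‖ ^ 2 - 1) ≤
      √(∑ i ∈ range (m + 1), ‖q (i + 1) - q i‖ ^ 2) + √(∑ i ∈ range m, ‖q (i + 1)‖ ^ 2) := by
  rcases lt_or_ge ‖z‖ 1 with hz1 | hz1
  · rw [Real.sqrt_eq_zero'.mpr (by nlinarith [norm_nonneg z])]
    positivity
  set r := ‖z‖
  set t := √(r ^ 2 - 1)
  set α := √(∑ i ∈ range (m + 1), ‖q (i + 1) - q i‖ ^ 2)
  set γ := √(∑ i ∈ range m, ‖q (i + 1)‖ ^ 2)
  set y := z ^ m + ∑ i ∈ range m, z ^ i * q (i + 1)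
  have hr : 0 < r := by linarith
  have hy : t * ‖y‖ ≤ r ^ m * α := by
    refine le_of_mul_le_mul_left ?_ hr
    calc r * (t * ‖y‖) = t * ‖∑ i ∈ range (m + 1), z ^ i * (q (i + 1) - q i)‖ := by
          rw [← norm_neg (∑ _ ∈ _, _), ← mul_quotient_eq_neg_sum_of_root hq0 hz, norm_mul]; ring
      _ ≤ r ^ (m + 1) * α := sqrt_norm_sq_sub_one_mul_norm_sum_pow_mul_le hz1 _ _
      _ = r * (r ^ m * α) := by ring
  have hpow : t * r ^ m ≤ t * ‖y‖ + r ^ m * γ := by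
    have hsplit : z ^ m = y - ∑ i ∈ range m, z ^ i * q (i + 1) := by simp [y]
    calc t * r ^ m = t * ‖y - ∑ i ∈ range m, z ^ i * q (i + 1)‖ := by rw [← hsplit, norm_pow]
      _ ≤ t * ‖y‖ + t * ‖∑ i ∈ range m, z ^ i * q (i + 1)‖ := by
          rw [← mul_add]; gcongr; exact norm_sub_le _ _
      _ ≤ t * ‖y‖ + r ^ m * γ :=
          add_le_add_right (sqrt_norm_sq_sub_one_mul_norm_sum_pow_mul_le hz1 _ _) _
  refine le_of_mul_le_mul_left ?_ (pow_pos hr m)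
  linarith

lemma Real.le_add_sqrt_one_add_of_sqrt_sq_sub_one_le {r a c : ℝ} (ha : 0 ≤ a) (hc : 0 ≤ c)
    (h : √(r ^ 2 - 1) ≤ a + √c) : r ≤ a + √(1 + c) := by
  have hc1 : √c ≤ √(1 + c) := Real.sqrt_le_sqrt (by linarith)
  have hsq : √(1 + c) ^ 2 = 1 + c := Real.sq_sqrt (by linarith)
  rcases le_or_gt r 1 with hr | hr
  · have : 1 ≤ √(1 + c) := Real.one_le_sqrt.mpr (by linarith)
    linarith
  have ht : √(r ^ 2 - 1) ^ 2 = r ^ 2 - 1 := Real.sq_sqrt (by nlinarith)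
  have hcs : √c ^ 2 = c := Real.sq_sqrt hc
  nlinarith [Real.sqrt_nonneg (r ^ 2 - 1), Real.sqrt_nonneg c, mul_le_mul_of_nonneg_left hc1 ha]

theorem bound_thm1_general (n : ℕ) (q : ℕ → ℍ[ℝ]) (hq0 : q 0 = 0) (z : ℍ[ℝ])
    (hz : z ^ n + ∑ i ∈ Finset.Icc 1 n, z ^ (i - 1) * q i = 0) :
    ‖z‖ ≤ Real.sqrt (∑ j ∈ Finset.Icc 1 n, ‖q j - q (j - 1)‖ ^ 2) +
      Real.sqrt (1 + ∑ j ∈ Finset.Icc 1 (n - 1), ‖q j‖ ^ 2) := by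
  obtain ⟨m, rfl⟩ : ∃ m, n = m + 1 :=
    Nat.exists_eq_add_one.mpr (Nat.pos_of_ne_zero (by rintro rfl; simp at hz))
  simp only [sum_Icc_one_eq_sum_range, Nat.add_sub_cancel] at hz ⊢
  exact Real.le_add_sqrt_one_add_of_sqrt_sq_sub_one_le (Real.sqrt_nonneg _)
    (sum_nonneg fun _ _ => sq_nonneg _) (sqrt_norm_sq_sub_one_le_of_root hq0 hz)

theorem bound_thm1 (n : ℕ) (hn : 2 ≤ n) (q : ℕ → ℍ[ℝ]) (hq0 : q 0 = 0) (z : ℍ[ℝ])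
    (hz : z ^ n + ∑ i ∈ Finset.Icc 1 n, z ^ (i - 1) * q i = 0) :
    ‖z‖ ≤ Real.sqrt (∑ j ∈ Finset.Icc 1 n, ‖q j - q (j - 1)‖ ^ 2) +
      Real.sqrt (1 + ∑ j ∈ Finset.Icc 1 (n - 1), ‖q j‖ ^ 2) :=
  bound_thm1_general n q hq0 z hz
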